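/- arXiv:math/0406249 — 5 statements merged into one kernel-verified Lean document; each statement's English description precedes it below -/
import Mathlib

section
/- Let U be a finite abelian group and F ≤ U a subgroup. The number of subgroups V of U containing F such that U/V is cyclic is at most the index [U : F]. -/
theorem count_cocyclic_subgroups_le_index (U : Type*) [CommGroup U] [Finite U]
    (F : Subgroup U) :
    Nat.card {V : Subgroup U // F ≤ V ∧ IsCyclic (U ⧸ V)} ≤ F.index := by
  classical
  have hexp : NeZero ((Monoid.exponent (U ⧸ F) : ℂ)) := by
    refine ⟨?_⟩
    exact_mod_cast (Monoid.exponent_ne_zero_of_finite : Monoid.exponent (U ⧸ F) ≠ 0)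
  obtain ⟨e⟩ := CommGroup.monoidHom_mulEquiv_of_hasEnoughRootsOfUnity (U ⧸ F) ℂ
  have hfin : Finite ((U ⧸ F) →* ℂˣ) := Finite.of_equiv _ e.symm.toEquiv
  have hcard : Nat.card ((U ⧸ F) →* ℂˣ) = F.index := by
    rw [Subgroup.index_eq_card]
    exact Nat.card_congr e.toEquiv
  rw [← hcard]
  have key : ∀ V : {V : Subgroup U // F ≤ V ∧ IsCyclic (U ⧸ V)},
      ∃ χ : (U ⧸ F) →* ℂˣ,
        (V : Subgroup U) = Subgroup.comap (QuotientGroup.mk' F) χ.ker := by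
    rintro ⟨V, hFV, hcyc⟩
    set n := Nat.card (U ⧸ V) with hn
    have hn0 : NeZero n := ⟨Nat.card_pos.ne'⟩
    have hnC : NeZero ((n : ℂ)) := ⟨by exact_mod_cast hn0.out⟩
    have hcardroots := HasEnoughRootsOfUnity.natCard_rootsOfUnity ℂ n
    have e' : (U ⧸ V) ≃* rootsOfUnity n ℂ :=
      mulEquivOfCyclicCardEq (by rw [hcardroots])
    let χ₀ : (U ⧸ V) →* ℂˣ := (rootsOfUnity n ℂ).subtype.comp e'.toMonoidHom
    have hχ₀ : Function.Injective χ₀ :=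
      (Subgroup.subtype_injective _).comp e'.injective
    let χu : U →* ℂˣ := χ₀.comp (QuotientGroup.mk' V)
    have hker : χu.ker = V := by
      rw [← MonoidHom.comap_ker, (MonoidHom.ker_eq_bot_iff χ₀).mpr hχ₀,
        MonoidHom.comap_bot, QuotientGroup.ker_mk']
    refine ⟨QuotientGroup.lift F χu (fun x hx => ?_), ?_⟩
    · have : x ∈ χu.ker := hker ▸ hFV hx
      exact this
    · ext x
      simp only [Subgroup.mem_comap, MonoidHom.mem_ker, QuotientGroup.mk'_apply,
        QuotientGroup.lift_mk']
      rw [← hker]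
      rfl
  choose Φ hΦ using key
  have hinj : Function.Injective Φ := fun V₁ V₂ h =>
    Subtype.ext (by rw [hΦ V₁, hΦ V₂, h])
  exact Nat.card_le_card_of_injective Φ hinj
end

section
/- Let U be a finite abelian group and F ≤ U a subgroup, and let ℓ ≥ 1. The number of subgroups V with F ≤ V ≤ U for which there exists a chain V = V_0 ≤ V_1 ≤ ... ≤ V_ℓ = U with each quotient V_i/V_{i−1} cyclic, is at most [U : F]^ℓ. -/
/-!
Dualise with ℂˣ-valued characters. The annihilator `V ↦ V^⊥` is injective on subgroups of `U`,
reverses inclusions, and `|F^⊥| = [U : F]`. A chain `V = V₀ ≤ ⋯ ≤ V_ℓ = U` with cyclic quotients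
becomes a chain `V^⊥ = V₀^⊥ ≥ ⋯ ≥ V_ℓ^⊥ = 1` whose quotients are cyclic again: evaluation at a
generator of `V_i / V_{i-1}` embeds `V_{i-1}^⊥ / V_i^⊥` into `ℂˣ`. Hence `V^⊥` is generated by
`ℓ` elements of `F^⊥`, and such an `ℓ`-tuple determines `V`.
-/

open Subgroup

theorem Subgroup.exists_eq_sup_zpowers_of_isCyclic {G : Type*} [Group G] {H K : Subgroup G}
    (hHK : H ≤ K) [(H.subgroupOf K).Normal] (hcyc : IsCyclic (K ⧸ H.subgroupOf K)) :
    ∃ g ∈ K, K = H ⊔ zpowers g := by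
  obtain ⟨q, hq⟩ := hcyc.exists_generator
  obtain ⟨⟨g, hgK⟩, rfl⟩ := QuotientGroup.mk_surjective q
  refine ⟨g, hgK, le_antisymm (fun x hx => ?_) (sup_le hHK (zpowers_le.2 hgK))⟩
  obtain ⟨k, hk⟩ := mem_zpowers_iff.mp (hq (QuotientGroup.mk ⟨x, hx⟩))
  rw [← QuotientGroup.mk_zpow, QuotientGroup.eq, mem_subgroupOf] at hk
  have hx : x = g ^ k * ((g ^ k)⁻¹ * x) := by group
  rw [hx, sup_comm]
  exact mul_mem_sup (zpow_mem_zpowers g k) (by simpa using hk)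

theorem Subgroup.exists_closure_range_eq_of_antitone {G : Type*} [CommGroup G] :
    ∀ {n : ℕ} (c : Fin (n + 1) → Subgroup G), Antitone c → c (Fin.last n) = ⊥ →
      (∀ i : Fin n, IsCyclic (c i.castSucc ⧸ (c i.succ).subgroupOf (c i.castSucc))) →
      ∃ g : Fin n → G, closure (Set.range g) = c 0
  | 0, c, _, hlast, _ => ⟨Fin.elim0, by simp [← hlast, Fin.last_zero]⟩
  | n + 1, c, hc, hlast, hcyc => by
    obtain ⟨g, hg⟩ := exists_closure_range_eq_of_antitone (Fin.tail c)
      (fun i j h => hc (Fin.succ_le_succ_iff.2 h)) (by simpa [Fin.tail] using hlast)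
      (fun i => by have := hcyc i.succ; rwa [← Fin.succ_castSucc] at this)
    obtain ⟨g₀, -, hc₀⟩ := exists_eq_sup_zpowers_of_isCyclic (hc (Fin.zero_le 1)) (hcyc 0)
    refine ⟨Fin.cons g₀ g, ?_⟩
    rw [Fin.range_cons, Set.insert_eq, closure_union, ← zpowers_eq_closure, hg, sup_comm]
    exact hc₀.symm

section Annihilator

variable {U : Type*} [CommGroup U]

def annihilator (V : Subgroup U) : Subgroup (U →* ℂˣ) :=
  (MonoidHom.domRestrictHom V ℂˣ).ker

theorem mem_annihilator {V : Subgroup U} {φ : U →* ℂˣ} : φ ∈ annihilator V ↔ V ≤ φ.ker := by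
  simp [annihilator, MonoidHom.domRestrict_eq_one_iff, SetLike.le_def]

theorem annihilator_antitone : Antitone (annihilator (U := U)) :=
  fun _ _ hVW _ hφ => mem_annihilator.2 (hVW.trans (mem_annihilator.1 hφ))

@[simp]
theorem annihilator_top : annihilator (⊤ : Subgroup U) = ⊥ := by
  ext φ
  simp [mem_annihilator, top_le_iff, MonoidHom.ker_eq_top_iff]

variable [Finite U]

theorem annihilator_injective : Function.Injective (annihilator (U := U)) :=
  fun _ _ h =>
    (CommGroup.subgroupOrderIsoSubgroupMonoidHom U ℂ).injective (congrArg OrderDual.toDual h)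

theorem card_annihilator (V : Subgroup U) : Nat.card (annihilator V) = V.index :=
  CommGroup.card_subgroupOrderIsoSubgroupMonoidHom ℂ V

theorem isCyclic_annihilator_quotient {V W : Subgroup U} (hVW : V ≤ W)
    (hcyc : IsCyclic (W ⧸ V.subgroupOf W)) :
    IsCyclic (annihilator V ⧸ (annihilator W).subgroupOf (annihilator V)) := by
  obtain ⟨w, -, rfl⟩ := exists_eq_sup_zpowers_of_isCyclic hVW hcyc
  let evalAt : annihilator V →* ℂˣ := (MonoidHom.eval w).comp (annihilator V).subtype
  have hker : evalAt.ker = (annihilator (V ⊔ zpowers w)).subgroupOf (annihilator V) := by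
    ext ⟨φ, hφ⟩
    simp [evalAt, mem_subgroupOf, mem_annihilator, zpowers_le, mem_annihilator.1 hφ]
  have : Finite (annihilator V) :=
    Nat.finite_of_card_ne_zero (card_annihilator V ▸ V.index_ne_zero_of_finite)
  have : IsCyclic (annihilator V ⧸ evalAt.ker) :=
    isCyclic_of_injective_ringHom ((Units.coeHom ℂ).comp (QuotientGroup.kerLift evalAt))
      (Units.val_injective.comp (QuotientGroup.kerLift_injective evalAt))
  exact isCyclic_of_surjective _ (QuotientGroup.quotientMulEquivOfEq hker).surjective

theorem exists_closure_eq_annihilator_of_chain {F V : Subgroup U} {ℓ : ℕ} (hFV : F ≤ V)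
    (hV : ∃ c : Fin (ℓ + 1) → Subgroup U, Monotone c ∧ c 0 = V ∧ c (Fin.last ℓ) = ⊤ ∧
      ∀ i : Fin ℓ, IsCyclic (c i.succ ⧸ (c i.castSucc).subgroupOf (c i.succ))) :
    ∃ g : Fin ℓ → annihilator F, closure (Set.range (Subtype.val ∘ g)) = annihilator V := by
  obtain ⟨c, hc, rfl, hlast, hcyc⟩ := hV
  obtain ⟨g, hg⟩ := exists_closure_range_eq_of_antitone (annihilator ∘ c)
    (annihilator_antitone.comp_monotone hc) (by simp [hlast])
    (fun i => isCyclic_annihilator_quotient (hc i.castSucc_le_succ) (hcyc i))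
  have hgF (i : Fin ℓ) : g i ∈ annihilator F :=
    annihilator_antitone hFV (hg ▸ subset_closure ⟨i, rfl⟩ : g i ∈ (annihilator ∘ c) 0)
  exact ⟨fun i => ⟨g i, hgF i⟩, hg⟩

end Annihilator

theorem count_copolycyclic_subgroups_le_index_pow_general (U : Type*) [CommGroup U] [Finite U]
    (F : Subgroup U) (ℓ : ℕ) :
    Nat.card {V : Subgroup U // F ≤ V ∧ ∃ c : Fin (ℓ + 1) → Subgroup U,
      Monotone c ∧ c 0 = V ∧ c (Fin.last ℓ) = ⊤ ∧
      ∀ i : Fin ℓ, IsCyclic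
        (↥(c i.succ) ⧸ (c i.castSucc).subgroupOf (c i.succ))} ≤ F.index ^ ℓ := by
  refine (Nat.card_le_card_of_injective (β := Fin ℓ → annihilator F)
    (fun V => (exists_closure_eq_annihilator_of_chain V.2.1 V.2.2).choose) ?_).trans ?_
  · intro V W h
    refine Subtype.ext (annihilator_injective ?_)
    rw [← (exists_closure_eq_annihilator_of_chain V.2.1 V.2.2).choose_spec,
      ← (exists_closure_eq_annihilator_of_chain W.2.1 W.2.2).choose_spec]
    exact congrArg (fun g => Subgroup.closure (Set.range (Subtype.val ∘ g))) h
  · rw [Nat.card_fun, card_annihilator, Nat.card_fin]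

theorem count_copolycyclic_subgroups_le_index_pow (U : Type*) [CommGroup U] [Finite U]
    (F : Subgroup U) (ℓ : ℕ) (hℓ : 1 ≤ ℓ) :
    Nat.card {V : Subgroup U // F ≤ V ∧ ∃ c : Fin (ℓ + 1) → Subgroup U,
      Monotone c ∧ c 0 = V ∧ c (Fin.last ℓ) = ⊤ ∧
      ∀ i : Fin ℓ, IsCyclic
        (↥(c i.succ) ⧸ (c i.castSucc).subgroupOf (c i.succ))} ≤ F.index ^ ℓ :=
  count_copolycyclic_subgroups_le_index_pow_general U F ℓ
end

section
/- Let R ≥ 1 be a real number. The maximum of the function f(σ, ρ) = σ(1−σ)ρ(1−ρ)/(σρ + R)² over σ, ρ ∈ (0,1) equals (√(R(R+1)) − R)²/(4R²), and is attained at σ = ρ = √(R(R+1)) − R. -/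
theorem max_of_sigma_rho (R : ℝ) (hR : 1 ≤ R) :
    (∀ σ ρ : ℝ, σ ∈ Set.Ioo (0 : ℝ) 1 → ρ ∈ Set.Ioo (0 : ℝ) 1 →
      σ * (1 - σ) * ρ * (1 - ρ) / (σ * ρ + R) ^ 2 ≤
        (Real.sqrt (R * (R + 1)) - R) ^ 2 / (4 * R ^ 2)) ∧
    (Real.sqrt (R * (R + 1)) - R) ∈ Set.Ioo (0 : ℝ) 1 ∧
    ((Real.sqrt (R * (R + 1)) - R) * (1 - (Real.sqrt (R * (R + 1)) - R)) *
        (Real.sqrt (R * (R + 1)) - R) * (1 - (Real.sqrt (R * (R + 1)) - R)) /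
        ((Real.sqrt (R * (R + 1)) - R) * (Real.sqrt (R * (R + 1)) - R) + R) ^ 2 =
      (Real.sqrt (R * (R + 1)) - R) ^ 2 / (4 * R ^ 2)) := by
  have hRpos : (0:ℝ) < R := lt_of_lt_of_le one_pos hR
  set s : ℝ := Real.sqrt (R * (R + 1)) - R with hs_def
  have hsqrt : Real.sqrt (R * (R + 1)) ^ 2 = R * (R + 1) :=
    Real.sq_sqrt (by positivity)
  have hs2 : s ^ 2 + 2 * R * s = R := by
    simp only [hs_def]; nlinarith [hsqrt]
  have hspos : 0 < s := by
    have : R < Real.sqrt (R * (R + 1)) :=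
      (Real.lt_sqrt (by positivity)).mpr (by nlinarith)
    simp only [hs_def]; linarith
  have hslt1 : s < 1 := by
    have : Real.sqrt (R * (R + 1)) < R + 1 :=
      (Real.sqrt_lt' (by positivity)).mpr (by nlinarith)
    simp only [hs_def]; linarith
  refine ⟨?_, ⟨hspos, hslt1⟩, ?_⟩
  · intro σ ρ hσ hρ
    obtain ⟨hσ0, hσ1⟩ := hσ
    obtain ⟨hρ0, hρ1⟩ := hρ
    set t : ℝ := Real.sqrt (σ * ρ) with ht_def
    have ht2 : t ^ 2 = σ * ρ := Real.sq_sqrt (by positivity)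
    have ht0 : 0 < t := Real.sqrt_pos.mpr (by positivity)
    have ht1 : t < 1 := by nlinarith [ht2]
    have hamgm : 2 * t ≤ σ + ρ := by nlinarith [sq_nonneg (σ - ρ), ht2]
    have key : 2 * R * t * (1 - t) ≤ s * (t ^ 2 + R) := by
      nlinarith [sq_nonneg ((s + 2*R) * t - R), hs2, hspos]
    have h1 : (1 - σ) * (1 - ρ) ≤ (1 - t) ^ 2 := by nlinarith [hamgm, ht2]
    have h2 : 4 * R ^ 2 * (t * (1 - t)) ^ 2 ≤ (s * (t ^ 2 + R)) ^ 2 := by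
      have hA : (0:ℝ) ≤ 2 * R * t * (1 - t) :=
        mul_nonneg (mul_nonneg (by linarith) ht0.le) (by linarith)
      nlinarith [pow_le_pow_left₀ hA key 2]
    rw [div_le_div_iff₀ (by positivity) (by positivity)]
    have e1 : σ * (1 - σ) * ρ * (1 - ρ) * (4 * R ^ 2)
        = (4 * R ^ 2 * t ^ 2) * ((1 - σ) * (1 - ρ)) := by rw [ht2]; ring
    have e2 : s ^ 2 * (σ * ρ + R) ^ 2 = s ^ 2 * (t ^ 2 + R) ^ 2 := by rw [ht2]
    rw [e1, e2]
    calc (4 * R ^ 2 * t ^ 2) * ((1 - σ) * (1 - ρ))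
        ≤ (4 * R ^ 2 * t ^ 2) * (1 - t) ^ 2 :=
          mul_le_mul_of_nonneg_left h1 (by positivity)
      _ ≤ s ^ 2 * (t ^ 2 + R) ^ 2 := by nlinarith [h2]
  · have hd : s * s + R = 2 * R * (1 - s) := by nlinarith [hs2]
    have hden : (0:ℝ) < 2 * R * (1 - s) :=
      mul_pos (by linarith) (by linarith)
    rw [hd, div_eq_div_iff (ne_of_gt (pow_pos hden 2)) (by positivity : (4 * R ^ 2 : ℝ) ≠ 0)]
    ring
end

section
/- Let G be a finite abelian p-group whose i-th layer Ω_i(G)/Ω_{i−1}(G) has F_p-dimension λ_i, and let ν_1 ≥ ν_2 ≥ ... be a partition with ν_i ≤ λ_i for all i. Then ∏_{i≥1} p^{ν_i(λ_i − ν_i)} ≤ ∏_{i≥1} p^{ν_{i+1}(λ_i − ν_i)} · [λ_i − ν_{i+1} choose ν_i − ν_{i+1}]_p ≤ p^{ν_1} · ∏_{i≥1} p^{ν_i(λ_i − ν_i)}. -/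
/-- `Omega p G i` is the subgroup of elements of order dividing `p ^ i`. -/
def Omega (p : ℕ) (G : Type*) [CommGroup G] (i : ℕ) : Subgroup G :=
  (powMonoidHom (p ^ i) : G →* G).ker

/-- The cardinality of the `i`-th layer `Ω_{i+1}(G)/Ω_i(G)` (with `i` starting at `0`). -/
noncomputable def layerCard (p : ℕ) (G : Type*) [CommGroup G] (i : ℕ) : ℕ :=
  Nat.card (↥(Omega p G (i + 1)) ⧸ (Omega p G i).subgroupOf (Omega p G (i + 1)))

/-- The Gaussian binomial coefficient `[a choose b]_p`: the number of `b`-dimensional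
subspaces of an `a`-dimensional vector space over `F_p`. -/
noncomputable def gbin (p a b : ℕ) : ℕ :=
  Nat.card {W : Submodule (ZMod p) (Fin a → ZMod p) // Module.finrank (ZMod p) W = b}

/-! Counting pairs (subspace, ordered basis) shows that the number of `k`-dimensional subspaces
of `𝔽_q^n`, times `|GL_k(𝔽_q)| = ∏_{i<k} (q^k - q^i)`, is the number `∏_{i<k} (q^n - q^i)` of
linearly independent `k`-tuples. Comparing the two products factor by factor gives
`q^{k(n-k)} ≤ [n choose k]_q ≤ q^{k(n-k)+k}`. For `n = λ_i - ν_{i+1}`, `k = ν_i - ν_{i+1}` this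
squeezes the `i`-th factor of the middle product between `p^{ν_i(λ_i-ν_i)}` and
`p^{ν_i-ν_{i+1}} p^{ν_i(λ_i-ν_i)}`, and the exponents `ν_i - ν_{i+1}` telescope to at most `ν_1`. -/

open Module Submodule

theorem pow_mul_prod_pow_sub_pow_le {q n k : ℕ} (hq : 0 < q) (hk : k ≤ n) :
    q ^ (k * (n - k)) * ∏ i : Fin k, (q ^ k - q ^ (i : ℕ)) ≤
      ∏ i : Fin k, (q ^ n - q ^ (i : ℕ)) := by
  rw [pow_mul', ← Fin.prod_const k (q ^ (n - k)), ← Finset.prod_mul_distrib]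
  refine Finset.prod_le_prod' fun i _ => ?_
  rw [mul_tsub, ← pow_add, ← pow_add, Nat.sub_add_cancel hk]
  exact Nat.sub_le_sub_left (Nat.pow_le_pow_right hq (Nat.le_add_left _ _)) _

theorem pow_le_prod_pow_sub_pow {q : ℕ} (hq : 1 < q) (k : ℕ) :
    q ^ ((k - 1) * k) ≤ ∏ i : Fin k, (q ^ k - q ^ (i : ℕ)) := by
  rw [pow_mul, ← Fin.prod_const k (q ^ (k - 1))]
  refine Finset.prod_le_prod' fun i _ => ?_
  have hik := i.isLt
  have hi : q ^ (i : ℕ) ≤ q ^ (k - 1) := Nat.pow_le_pow_right (by omega) (by omega)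
  have hk : q ^ k = q ^ (k - 1) * q := by rw [← pow_succ, Nat.sub_add_cancel (by omega)]
  have h2 : 2 * q ^ (k - 1) ≤ q ^ (k - 1) * q := by rw [mul_comm]; exact Nat.mul_le_mul_left _ hq
  omega

section Grassmannian

variable {K V : Type*} [Field K] [Fintype K] [AddCommGroup V] [Module K V] [Finite V]

noncomputable def spanOfLinearIndependent (k : ℕ) (s : {s : Fin k → V // LinearIndependent K s}) :
    {W : Submodule K V // finrank K W = k} :=
  ⟨span K (Set.range s.1), by rw [finrank_span_eq_card s.2, Fintype.card_fin]⟩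

noncomputable def fiberSpanEquiv (k : ℕ) (W : {W : Submodule K V // finrank K W = k}) :
    {s // spanOfLinearIndependent k s = W} ≃ {t : Fin k → W.1 // LinearIndependent K t} where
  toFun s := ⟨fun i => ⟨s.1.1 i, by
      rw [← congrArg Subtype.val s.2]; exact subset_span ⟨i, rfl⟩⟩,
    LinearIndependent.of_comp W.1.subtype s.1.2⟩
  invFun t := ⟨⟨W.1.subtype ∘ t.1, t.2.map' _ W.1.ker_subtype⟩, by
    refine Subtype.ext (eq_of_le_of_finrank_eq ?_ ?_)
    · exact span_le.2 (Set.range_subset_iff.2 fun i => (t.1 i).2)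
    · exact (spanOfLinearIndependent k _).2.trans W.2.symm⟩
  left_inv _ := rfl
  right_inv _ := rfl

theorem card_finrank_eq_mul_prod {k : ℕ} (hk : k ≤ finrank K V) :
    Nat.card {W : Submodule K V // finrank K W = k} *
        ∏ i : Fin k, (Fintype.card K ^ k - Fintype.card K ^ (i : ℕ)) =
      ∏ i : Fin k, (Fintype.card K ^ finrank K V - Fintype.card K ^ (i : ℕ)) := by
  have : Fintype {W : Submodule K V // finrank K W = k} := Fintype.ofFinite _
  rw [← card_linearIndependent hk,
    ← Nat.card_congr (Equiv.sigmaFiberEquiv (spanOfLinearIndependent k)), Nat.card_sigma,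
    Nat.card_eq_fintype_card, ← smul_eq_mul, ← Finset.card_univ, ← Finset.sum_const]
  refine Finset.sum_congr rfl fun W _ => ?_
  rw [Nat.card_congr (fiberSpanEquiv k W), card_linearIndependent W.2.ge, W.2]

theorem pow_le_card_finrank_eq {k : ℕ} (hk : k ≤ finrank K V) :
    Fintype.card K ^ (k * (finrank K V - k)) ≤
      Nat.card {W : Submodule K V // finrank K W = k} := by
  have hP := pow_le_prod_pow_sub_pow (Fintype.one_lt_card (α := K)) k
  refine Nat.le_of_mul_le_mul_right ?_ (hP.trans_lt' (by positivity))
  rw [card_finrank_eq_mul_prod hk]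
  exact pow_mul_prod_pow_sub_pow_le (Fintype.card_pos) hk

theorem card_finrank_eq_le_pow {k : ℕ} (hk : k ≤ finrank K V) :
    Nat.card {W : Submodule K V // finrank K W = k} ≤
      Fintype.card K ^ (k * (finrank K V - k) + k) := by
  set q := Fintype.card K
  have hP := pow_le_prod_pow_sub_pow (Fintype.one_lt_card (α := K)) k
  refine Nat.le_of_mul_le_mul_right ?_ (pow_pos (Fintype.card_pos (α := K)) ((k - 1) * k))
  calc Nat.card {W : Submodule K V // finrank K W = k} * q ^ ((k - 1) * k)
      ≤ ∏ i : Fin k, (q ^ finrank K V - q ^ (i : ℕ)) := by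
        rw [← card_finrank_eq_mul_prod hk]; gcongr
    _ ≤ ∏ _i : Fin k, q ^ finrank K V := Finset.prod_le_prod' fun _ _ => Nat.sub_le _ _
    _ = q ^ (k * (finrank K V - k) + k) * q ^ ((k - 1) * k) := by
        rw [Finset.prod_const, Finset.card_univ, Fintype.card_fin, ← pow_mul, ← pow_add]
        congr 1
        obtain ⟨m, hm⟩ := Nat.exists_eq_add_of_le hk
        rw [hm, Nat.add_sub_cancel_left]
        cases k
        · simp
        · rw [Nat.add_sub_cancel]; ring

end Grassmannian

theorem pow_le_gbin {p n k : ℕ} (hp : p.Prime) (hk : k ≤ n) : p ^ (k * (n - k)) ≤ gbin p n k := by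
  have := Fact.mk hp
  have h := pow_le_card_finrank_eq (K := ZMod p) (V := Fin n → ZMod p) (k := k)
    (by rwa [finrank_fin_fun])
  rwa [ZMod.card, finrank_fin_fun] at h

theorem gbin_le_pow {p n k : ℕ} (hp : p.Prime) (hk : k ≤ n) :
    gbin p n k ≤ p ^ (k * (n - k) + k) := by
  have := Fact.mk hp
  have h := card_finrank_eq_le_pow (K := ZMod p) (V := Fin n → ZMod p) (k := k)
    (by rwa [finrank_fin_fun])
  rwa [ZMod.card, finrank_fin_fun] at h

theorem pow_le_pow_mul_gbin {p a b l : ℕ} (hp : p.Prime) (hab : a ≤ b) (hbl : b ≤ l) :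
    p ^ (b * (l - b)) ≤ p ^ (a * (l - b)) * gbin p (l - a) (b - a) := by
  have h := pow_le_gbin hp (k := b - a) (n := l - a) (by omega)
  rw [show l - a - (b - a) = l - b by omega] at h
  calc p ^ (b * (l - b)) = p ^ (a * (l - b)) * p ^ ((b - a) * (l - b)) := by
        rw [← pow_add, ← add_mul, Nat.add_sub_cancel' hab]
    _ ≤ p ^ (a * (l - b)) * gbin p (l - a) (b - a) := by gcongr

theorem pow_mul_gbin_le {p a b l : ℕ} (hp : p.Prime) (hab : a ≤ b) (hbl : b ≤ l) :
    p ^ (a * (l - b)) * gbin p (l - a) (b - a) ≤ p ^ (b - a) * p ^ (b * (l - b)) := by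
  have h := gbin_le_pow hp (k := b - a) (n := l - a) (by omega)
  rw [show l - a - (b - a) = l - b by omega] at h
  calc p ^ (a * (l - b)) * gbin p (l - a) (b - a)
      ≤ p ^ (a * (l - b)) * p ^ ((b - a) * (l - b) + (b - a)) := by gcongr
    _ = p ^ (b - a) * p ^ (b * (l - b)) := by
        rw [← pow_add, ← pow_add, ← add_assoc, ← add_mul, Nat.add_sub_cancel' hab, add_comm]

theorem Antitone.sum_range_tsub {f : ℕ → ℕ} (hf : Antitone f) (n : ℕ) :
    ∑ i ∈ Finset.range n, (f i - f (i + 1)) = f 0 - f n := by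
  induction n with
  | zero => simp
  | succ n ih =>
    rw [Finset.sum_range_succ, ih]
    have h0 : f n ≤ f 0 := hf n.zero_le
    have h1 : f (n + 1) ≤ f n := hf n.le_succ
    omega

theorem layer_product_bounds_general (p : ℕ) (hp : p.Prime) (r : ℕ) (lam nu : ℕ → ℕ)
    (hnu_anti : Antitone nu)
    (hle : ∀ i, nu i ≤ lam i) :
    (∏ i ∈ Finset.range r, p ^ (nu i * (lam i - nu i)) ≤
      ∏ i ∈ Finset.range r,
        p ^ (nu (i + 1) * (lam i - nu i)) * gbin p (lam i - nu (i + 1)) (nu i - nu (i + 1))) ∧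
    (∏ i ∈ Finset.range r,
        p ^ (nu (i + 1) * (lam i - nu i)) * gbin p (lam i - nu (i + 1)) (nu i - nu (i + 1)) ≤
      p ^ nu 0 * ∏ i ∈ Finset.range r, p ^ (nu i * (lam i - nu i))) := by
  have hsucc : ∀ i, nu (i + 1) ≤ nu i := fun i => hnu_anti i.le_succ
  refine ⟨Finset.prod_le_prod' fun i _ => pow_le_pow_mul_gbin hp (hsucc i) (hle i), ?_⟩
  calc _ ≤ ∏ i ∈ Finset.range r, p ^ (nu i - nu (i + 1)) * p ^ (nu i * (lam i - nu i)) :=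
        Finset.prod_le_prod' fun i _ => pow_mul_gbin_le hp (hsucc i) (hle i)
    _ = (∏ i ∈ Finset.range r, p ^ (nu i - nu (i + 1))) *
          ∏ i ∈ Finset.range r, p ^ (nu i * (lam i - nu i)) := Finset.prod_mul_distrib
    _ ≤ p ^ nu 0 * ∏ i ∈ Finset.range r, p ^ (nu i * (lam i - nu i)) := by
        gcongr
        rw [Finset.prod_pow_eq_pow_sum, hnu_anti.sum_range_tsub]
        exact Nat.pow_le_pow_right hp.pos (Nat.sub_le _ _)

theorem layer_product_bounds (p : ℕ) (hp : p.Prime) (G : Type*) [CommGroup G] [Finite G]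
    (hG : IsPGroup p G) (r : ℕ) (lam nu : ℕ → ℕ)
    (hlayer : ∀ i, p ^ lam i = layerCard p G i)
    (hlam_anti : Antitone lam) (hnu_anti : Antitone nu)
    (hle : ∀ i, nu i ≤ lam i) (hsupp : ∀ i, r ≤ i → lam i = 0) :
    (∏ i ∈ Finset.range r, p ^ (nu i * (lam i - nu i)) ≤
      ∏ i ∈ Finset.range r,
        p ^ (nu (i + 1) * (lam i - nu i)) * gbin p (lam i - nu (i + 1)) (nu i - nu (i + 1))) ∧
    (∏ i ∈ Finset.range r,
        p ^ (nu (i + 1) * (lam i - nu i)) * gbin p (lam i - nu (i + 1)) (nu i - nu (i + 1)) ≤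
      p ^ nu 0 * ∏ i ∈ Finset.range r, p ^ (nu i * (lam i - nu i))) :=
  layer_product_bounds_general p hp r lam nu hnu_anti hle
end

section
/- Let G be a homocyclic abelian p-group of exponent p^i with d generators (i.e., G ≅ (Z/p^i Z)^d), and let 0 ≤ ν ≤ d. The number of subgroups H of G isomorphic to (Z/p^i Z)^ν (i.e., of layer type ν repeated i times) is at least p^{iν(d−ν)}. -/
/-! Splitting `(ℤ/p^i)^d = (ℤ/p^i)^ν × (ℤ/p^i)^(d-ν)`, the graphs of the `p^(iν(d-ν))`
homomorphisms `(ℤ/p^i)^ν → (ℤ/p^i)^(d-ν)` are pairwise distinct subgroups, each isomorphic to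
`(ℤ/p^i)^ν` through the first projection. -/

namespace AddMonoidHom

variable {A B : Type*} [AddGroup A] [AddGroup B]

theorem graph_injective : Function.Injective (graph : (A →+ B) → AddSubgroup (A × B)) := by
  intro f g h
  ext a
  have hmem : (a, f a) ∈ g.graph := h ▸ mem_graph.2 rfl
  exact (mem_graph.1 hmem).symm

noncomputable def graphAddEquiv (f : A →+ B) : f.graph ≃+ A :=
  (AddEquiv.addSubgroupCongr f.graph_eq_range_prod).trans
    (ofInjective (f := (id A).prod f) fun _ _ h => congrArg Prod.fst h).symm

end AddMonoidHom

section

variable {G G' K : Type*} [AddGroup G] [AddGroup G'] [AddGroup K]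

theorem AddEquiv.natCard_addSubgroups_addEquiv_congr (e : G ≃+ G') :
    Nat.card {H : AddSubgroup G // Nonempty (H ≃+ K)} =
      Nat.card {H : AddSubgroup G' // Nonempty (H ≃+ K)} :=
  Nat.card_congr <| e.mapAddSubgroup.toEquiv.subtypeEquiv fun H =>
    ⟨fun ⟨φ⟩ => ⟨(e.addSubgroupMap H).symm.trans φ⟩, fun ⟨φ⟩ => ⟨(e.addSubgroupMap H).trans φ⟩⟩

theorem natCard_addMonoidHom_le_natCard_addSubgroups_addEquiv [Finite G] [Finite G'] :
    Nat.card (G →+ G') ≤ Nat.card {H : AddSubgroup (G × G') // Nonempty (H ≃+ G)} :=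
  Nat.card_le_card_of_injective (fun f => ⟨f.graph, ⟨f.graphAddEquiv⟩⟩)
    fun _ _ h => AddMonoidHom.graph_injective (congrArg Subtype.val h)

end

theorem natCard_addMonoidHom_pi_zmod (n : ℕ) [NeZero n] (ι κ : Type*) [Fintype ι] [Fintype κ]
    [DecidableEq ι] :
    Nat.card ((ι → ZMod n) →+ (κ → ZMod n)) = n ^ (Fintype.card ι * Fintype.card κ) := by
  rw [Nat.card_congr ((AddMonoidHom.toZModLinearMapEquiv n).toEquiv.trans
    LinearMap.toMatrix'.toEquiv)]
  simp [Matrix, Nat.card_fun, ZMod.card, pow_mul]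

theorem count_homocyclic_subgroups_ge_general (p i d ν : ℕ) (hp : p.Prime)
    (hν : ν ≤ d) :
    p ^ (i * ν * (d - ν)) ≤
      Nat.card {H : AddSubgroup (Fin d → ZMod (p ^ i)) //
        Nonempty (H ≃+ (Fin ν → ZMod (p ^ i)))} := by
  have : NeZero (p ^ i) := ⟨pow_ne_zero _ hp.ne_zero⟩
  obtain ⟨k, rfl⟩ := Nat.exists_eq_add_of_le hν
  let split : (Fin (ν + k) → ZMod (p ^ i)) ≃+ (Fin ν → ZMod (p ^ i)) × (Fin k → ZMod (p ^ i)) :=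
    (AddEquiv.arrowCongr finSumFinEquiv.symm (.refl _)).trans
      (LinearEquiv.sumArrowLequivProdArrow _ _ ℕ _).toAddEquiv
  calc p ^ (i * ν * (ν + k - ν))
      = Nat.card ((Fin ν → ZMod (p ^ i)) →+ (Fin k → ZMod (p ^ i))) := by
        rw [natCard_addMonoidHom_pi_zmod, Nat.add_sub_cancel_left, Fintype.card_fin,
          Fintype.card_fin, ← pow_mul, mul_assoc]
    _ ≤ _ := natCard_addMonoidHom_le_natCard_addSubgroups_addEquiv
    _ = _ := split.natCard_addSubgroups_addEquiv_congr.symm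

theorem count_homocyclic_subgroups_ge (p i d ν : ℕ) (hp : p.Prime) (hi : 0 < i)
    (hν : ν ≤ d) :
    p ^ (i * ν * (d - ν)) ≤
      Nat.card {H : AddSubgroup (Fin d → ZMod (p ^ i)) //
        Nonempty (H ≃+ (Fin ν → ZMod (p ^ i)))} :=
  count_homocyclic_subgroups_ge_general p i d ν hp hν
end
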